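/- Let B ∈ V(A'(T)) and suppose the decreasing sequence r = r_1 ≥ r_2 ≥ … ≥ r_n = s in B satisfies (r_i, r_{i+1}) ∈ Cg^B(c,d) for some c, d ∈ B, and there are constants p_1, q_1, …, p_{n−1}, q_{n−1} ∈ B such that r_i = J(p_i, q_i, r_i) and r_{i+1} = J(p_i, q_i, r_{i+1}) for 1 ≤ i ≤ n−1. Then there exists a constant ρ ∈ B such that r = J(r, ρ, r') and s = J(r, ρ, s'), where r' = e2(r,ρ,r) and s' = e2(r,ρ,s). -/
import Mathlib


open FirstOrder

namespace McKenzie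

/-- A Turing machine instruction `(s, r, w, d, t)`: "in state `s` reading `r`,
write `w`, move in direction `d` (`true` = right, `false` = left), enter state `t`". -/
structure Instr (n : ℕ) where
  s : Fin (n + 1)
  r : Bool
  w : Bool
  d : Bool
  t : Fin (n + 1)

/-- A Turing machine: a finite list of instructions on states `μ0, …, μn`
(represented by `Fin (states+1)`), where `μ0` is the halting state (carrying no
instructions) and `μ1` is the initial state. -/
structure TM where
  states : ℕ
  instr : List (Instr states)
  halt_no_instr : ∀ i ∈ instr, i.s ≠ 0

/-- A configuration of a Turing machine: a tape, a head position and a state. -/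
structure Cfg (T : TM) where
  tape : ℤ → Bool
  head : ℤ
  state : Fin (T.states + 1)

/-- One computation step of the machine (using the first applicable instruction). -/
def TM.step (T : TM) (Q : Cfg T) : Option (Cfg T) :=
  match T.instr.find? (fun i => decide (i.s = Q.state ∧ i.r = Q.tape Q.head)) with
  | none => none
  | some i =>
      some ⟨Function.update Q.tape Q.head i.w,
        if i.d then Q.head + 1 else Q.head - 1, i.t⟩

/-- The configuration after `n` steps when started in state `μ1` on the blank tape. -/
def TM.run (T : TM) : ℕ → Option (Cfg T)
  | 0 => some ⟨fun _ => false, 0, 1⟩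
  | n + 1 => (T.run n).bind T.step

/-- `T` halts (started in the initial state `μ1` on the empty, all-zero, tape). -/
def TM.Halts (T : TM) : Prop := ∃ (n : ℕ) (Q : Cfg T), T.run n = some Q ∧ Q.state = 0

/-- The universe of the algebra `A'(T)`:
`0`, `U = {1,2,H}`, `W = {C, D, ∂C, ∂D}`, and
`V = {C_ir^s, D_ir^s, M_i^r}` together with their barred versions. -/
inductive El (T : TM) : Type
  | zero
  | one
  | two
  | H
  | C (bar : Bool)
  | D (bar : Bool)
  | Cv (bar : Bool) (i : Fin (T.states + 1)) (r s : Bool)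
  | Dv (bar : Bool) (i : Fin (T.states + 1)) (r s : Bool)
  | Mv (bar : Bool) (i : Fin (T.states + 1)) (r : Bool)
  deriving DecidableEq

namespace El

variable {T : TM}

/-- The bar involution `∂`, defined (only) on `V ∪ W`. -/
def bar : El T → Option (El T)
  | C b => some (C (!b))
  | D b => some (D (!b))
  | Cv b i r s => some (Cv (!b) i r s)
  | Dv b i r s => some (Dv (!b) i r s)
  | Mv b i r => some (Mv (!b) i r)
  | _ => none

/-- The flat (height 1) semilattice meet with bottom element `0`. -/
def meet (x y : El T) : El T := if x = y then x else zero

/-- Join in the flat semilattice, for comparable elements. -/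
def fjoin (x y : El T) : El T := if x = zero then y else x

/-- The nonassociative multiplication: `2·D = H·C = D`, `1·C = C`,
`2·∂D = H·∂C = ∂D`, `1·∂C = ∂C`, and `0` otherwise. -/
def mul : El T → El T → El T
  | two, D b => D b
  | H, C b => D b
  | one, C b => C b
  | _, _ => zero

/-- `J(x,y,z) = (x ∧ ∂y ∧ z) ∨ (x ∧ y)`. -/
def opJ (x y z : El T) : El T :=
  if x = y then x else if bar y = some x then meet x z else zero

/-- `J'(x,y,z) = (x ∧ y ∧ z) ∨ (x ∧ ∂y)`. -/
def opJ' (x y z : El T) : El T :=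
  if x = y then meet x z else if bar y = some x then x else zero

/-- `K(x,y,z) = (∂x ∧ y) ∨ (∂x ∧ ∂y ∧ z) ∨ (x ∧ y ∧ z)`. -/
def opK (x y z : El T) : El T :=
  if bar y = some x then y
  else if x = y ∧ bar z = some x then z
  else meet x (meet y z)

/-- `(x ∧ y) ∨ (x ∧ z)`. -/
def sCore (x y z : El T) : El T := fjoin (meet x y) (meet x z)

/-- Membership in `V₀` (the elements of `V` with state index `0`). -/
def isV0 : El T → Bool
  | Cv _ i _ _ => decide (i = 0)
  | Dv _ i _ _ => decide (i = 0)
  | Mv _ i _ => decide (i = 0)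
  | _ => false

/-- `S₀(u,x,y,z) = (x∧y) ∨ (x∧z)` if `u ∈ V₀`, else `0`. -/
def opS0 (u x y z : El T) : El T := if isV0 u then sCore x y z else zero

/-- `S₁(u,x,y,z) = (x∧y) ∨ (x∧z)` if `u ∈ {1,2}`, else `0`. -/
def opS1 (u x y z : El T) : El T := if u = one ∨ u = two then sCore x y z else zero

/-- `S₂(u,v,x,y,z) = (x∧y) ∨ (x∧z)` if `u = ∂v ∈ V ∪ W`, else `0`. -/
def opS2 (u v x y z : El T) : El T := if bar v = some u then sCore x y z else zero

/-- The operation `T(w,x,y,z)`. -/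
def opT (w x y z : El T) : El T :=
  if mul w x = mul y z then
    if w = y ∧ x = z then mul w x
    else if mul w x ≠ zero then (bar (mul w x)).getD zero else zero
  else zero

/-- `I(1) = C₁₀⁰`, `I(H) = M₁⁰`, `I(2) = D₁₀⁰`, and `0` otherwise. -/
def opI : El T → El T
  | one => Cv false 1 false false
  | H => Mv false 1 false
  | two => Dv false 1 false false
  | _ => zero

/-- The left-moving machine operation `L_{irt}` attached to an instruction
`(μ_i, r, s, L, μ_j)` and `t ∈ {0,1}`. -/
def opL (ins : Instr T.states) (t : Bool) : El T → El T → El T → El T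
  | one, one, Cv b i r s' => if i = ins.s ∧ r = ins.r then Cv b ins.t t s' else zero
  | H, one, Cv b i r s' => if i = ins.s ∧ r = ins.r ∧ s' = t then Mv b ins.t t else zero
  | two, H, Mv b i r => if i = ins.s ∧ r = ins.r then Dv b ins.t t ins.w else zero
  | two, two, Dv b i r s' => if i = ins.s ∧ r = ins.r then Dv b ins.t t s' else zero
  | _, _, _ => zero

/-- The right-moving machine operation `R_{irt}` attached to an instruction
`(μ_i, r, s, R, μ_j)` and `t ∈ {0,1}`. -/
def opR (ins : Instr T.states) (t : Bool) : El T → El T → El T → El T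
  | one, one, Cv b i r s' => if i = ins.s ∧ r = ins.r then Cv b ins.t t s' else zero
  | H, one, Mv b i r => if i = ins.s ∧ r = ins.r then Cv b ins.t t ins.w else zero
  | two, H, Dv b i r s' => if i = ins.s ∧ r = ins.r ∧ s' = t then Mv b ins.t t else zero
  | two, two, Dv b i r s' => if i = ins.s ∧ r = ins.r then Dv b ins.t t s' else zero
  | _, _, _ => zero

/-- The machine operation (from `𝓛 ∪ 𝓡`) attached to an instruction. -/
def mach (ins : Instr T.states) (t : Bool) (x y u : El T) : El T :=
  if ins.d then opR ins t x y u else opL ins t x y u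

/-- The relation `≺` on `{1,2,H}`. -/
def prec : El T → El T → Bool
  | two, two => true
  | two, H => true
  | one, one => true
  | _, _ => false

/-- The operation `U_F^1`. -/
def opU1 (F : El T → El T → El T → El T) (x y z u : El T) : El T :=
  if prec x z then
    if y = z then F x y u
    else if F x y u ≠ zero then (bar (F x y u)).getD zero else zero
  else zero

/-- The operation `U_F^0`. -/
def opU0 (F : El T → El T → El T → El T) (x y z u : El T) : El T :=
  if prec x z then
    if x = y then F y z u
    else if F y z u ≠ zero then (bar (F y z u)).getD zero else zero
  else zero

end El

/-- The unary operation symbols of `A'(T)`. -/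
inductive Ops1 : Type
  | I

/-- The binary operation symbols of `A'(T)`. -/
inductive Ops2 : Type
  | meet
  | mul

/-- The ternary operation symbols of `A'(T)`: `J`, `J'`, `K` and the machine
operations from `𝓛 ∪ 𝓡` (one for each instruction and each `t ∈ {0,1}`). -/
inductive Ops3 (T : TM) : Type
  | J
  | J'
  | K
  | mach (k : Fin T.instr.length) (t : Bool)

/-- The 4-ary operation symbols of `A'(T)`: `S₀`, `S₁`, `T` and the operations
`U_F^1, U_F^0` for `F ∈ 𝓛 ∪ 𝓡`. -/
inductive Ops4 (T : TM) : Type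
  | S0
  | S1
  | T
  | u1 (k : Fin T.instr.length) (t : Bool)
  | u0 (k : Fin T.instr.length) (t : Bool)

/-- The 5-ary operation symbols of `A'(T)`: `S₂`. -/
inductive Ops5 : Type
  | S2

/-- The signature (similarity type) of the algebra `A'(T)`; the constant symbol
(of arity 0) denotes the bottom element `0`. -/
def Sig (T : TM) : FirstOrder.Language.{0, 0} where
  Functions n :=
    match n with
    | 0 => PUnit
    | 1 => Ops1
    | 2 => Ops2
    | 3 => Ops3 T
    | 4 => Ops4 T
    | 5 => Ops5
    | _ => PEmpty
  Relations _ := PEmpty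


/-- The constant symbol `0` as an element of the signature. -/
def fn0 (T : TM) : (Sig T).Functions 0 := PUnit.unit
/-- Unary operation symbols as elements of the signature. -/
def fn1 (T : TM) (o : Ops1) : (Sig T).Functions 1 := o
/-- Binary operation symbols as elements of the signature. -/
def fn2 (T : TM) (o : Ops2) : (Sig T).Functions 2 := o
/-- Ternary operation symbols as elements of the signature. -/
def fn3 (T : TM) (o : Ops3 T) : (Sig T).Functions 3 := o
/-- 4-ary operation symbols as elements of the signature. -/
def fn4 (T : TM) (o : Ops4 T) : (Sig T).Functions 4 := o
/-- 5-ary operation symbols as elements of the signature. -/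
def fn5 (T : TM) (o : Ops5) : (Sig T).Functions 5 := o

/-- The algebra `A'(T)`: the interpretation of the signature `Sig T` on `El T`. -/
instance elStructure (T : TM) : (Sig T).Structure (El T) where
  funMap {n} f v :=
    match n, f, v with
    | 0, _, _ => El.zero
    | 1, Ops1.I, v => El.opI (v 0)
    | 2, Ops2.meet, v => El.meet (v 0) (v 1)
    | 2, Ops2.mul, v => El.mul (v 0) (v 1)
    | 3, Ops3.J, v => El.opJ (v 0) (v 1) (v 2)
    | 3, Ops3.J', v => El.opJ' (v 0) (v 1) (v 2)
    | 3, Ops3.K, v => El.opK (v 0) (v 1) (v 2)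
    | 3, Ops3.mach k t, v => El.mach (T.instr.get k) t (v 0) (v 1) (v 2)
    | 4, Ops4.S0, v => El.opS0 (v 0) (v 1) (v 2) (v 3)
    | 4, Ops4.S1, v => El.opS1 (v 0) (v 1) (v 2) (v 3)
    | 4, Ops4.T, v => El.opT (v 0) (v 1) (v 2) (v 3)
    | 4, Ops4.u1 k t, v => El.opU1 (El.mach (T.instr.get k) t) (v 0) (v 1) (v 2) (v 3)
    | 4, Ops4.u0 k t, v => El.opU0 (El.mach (T.instr.get k) t) (v 0) (v 1) (v 2) (v 3)
    | 5, Ops5.S2, v => El.opS2 (v 0) (v 1) (v 2) (v 3) (v 4)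
    | _ + 6, f, _ => f.elim
  RelMap {n} r _ := r.elim

/-- The product algebra `A'(T)^ι`. -/
instance piStructure (T : TM) (ι : Type*) : (Sig T).Structure (ι → El T) where
  funMap f v l := Language.Structure.funMap f fun i => v i l
  RelMap r _ := r.elim

open Language

/-- A congruence of an algebra: an equivalence relation compatible with all the
fundamental operations. -/
def IsCongruence (L : Language) (B : Type*) [L.Structure B] (ρ : B → B → Prop) : Prop :=
  Equivalence ρ ∧
    ∀ {n : ℕ} (f : L.Functions n) (v w : Fin n → B),
      (∀ i, ρ (v i) (w i)) → ρ (Structure.funMap f v) (Structure.funMap f w)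

/-- `PrinCg L B a b x y` says that `(x, y)` lies in the principal congruence
`Cg^B(a,b)` generated by the pair `(a,b)`. -/
def PrinCg (L : Language) (B : Type*) [L.Structure B] (a b x y : B) : Prop :=
  ∀ ρ : B → B → Prop, IsCongruence L B ρ → ρ a b → ρ x y

/-- `B` satisfies every identity holding in `A`; by Birkhoff's theorem this says
exactly that `B` belongs to the variety generated by `A`. -/
def ModelsIdsOf (L : Language) (A : Type*) [L.Structure A] (B : Type*) [L.Structure B] : Prop :=
  ∀ t₁ t₂ : L.Term ℕ,
    (∀ v : ℕ → A, t₁.realize v = t₂.realize v) →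
    ∀ v : ℕ → B, t₁.realize v = t₂.realize v

/-- Membership in the variety `V(A'(T))` generated by `A'(T)`. -/
def InVariety (T : TM) (B : Type*) [(Sig T).Structure B] : Prop :=
  ModelsIdsOf (Sig T) (El T) B

/-- The variety `V(A'(T))` as a class of algebras. -/
def VClass (T : TM) : ∀ (B : Type) [inst : (Sig T).Structure B], Prop :=
  fun B inst => @InVariety T B inst

/-- `φ(w,x,y,z)` is a congruence formula for the class `C`: in every member of `C`
it implies `(w,x) ∈ Cg(y,z)`. -/
def IsCongruenceFormula (L : Language) (C : ∀ (B : Type) [inst : L.Structure B], Prop)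
    (φ : L.Formula (Fin 4)) : Prop :=
  ∀ (B : Type) [L.Structure B], C B → ∀ w x y z : B,
    φ.Realize ![w, x, y, z] → PrinCg L B y z w x

/-- The class `C` has definable principal subcongruences: there are congruence
formulas `Γ` and `ψ` such that any pair `a ≠ b` admits a subpair `c ≠ d` of
`Cg(a,b)` (witnessed by `Γ`) whose principal congruence is defined by `ψ`. -/
def HasDPSC (L : Language) (C : ∀ (B : Type) [inst : L.Structure B], Prop) : Prop :=
  ∃ Γ ψ : L.Formula (Fin 4),
    IsCongruenceFormula L C Γ ∧ IsCongruenceFormula L C ψ ∧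
      ∀ (B : Type) [L.Structure B], C B → ∀ a b : B, a ≠ b →
        ∃ c d : B, c ≠ d ∧ Γ.Realize ![c, d, a, b] ∧
          ∀ x y : B, PrinCg L B c d x y ↔ ψ.Realize ![x, y, c, d]

/-- The variety `V(A'(T))` is axiomatized by a finite set of identities
(which hold in `A'(T)`). -/
def FinitelyBased (T : TM) : Prop :=
  ∃ E : List ((Sig T).Term ℕ × (Sig T).Term ℕ),
    (∀ e ∈ E, ∀ v : ℕ → El T, e.1.realize v = e.2.realize v) ∧
    ∀ (B : Type) [(Sig T).Structure B],
      (InVariety T B ↔ ∀ e ∈ E, ∀ v : ℕ → B, e.1.realize v = e.2.realize v)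

/-- An algebra is subdirectly irreducible iff some pair `a ≠ b` (generating the
monolith) belongs to every nontrivial congruence. -/
def IsSI (L : Language) (B : Type*) [L.Structure B] : Prop :=
  ∃ a b : B, a ≠ b ∧ ∀ c d : B, c ≠ d → PrinCg L B c d a b

/-- An algebra is finitely subdirectly irreducible iff any two nontrivial principal
congruences have nontrivial intersection. -/
def IsFSI (L : Language) (B : Type*) [L.Structure B] : Prop :=
  ∀ a b c d : B, a ≠ b → c ≠ d →
    ∃ x y : B, x ≠ y ∧ PrinCg L B a b x y ∧ PrinCg L B c d x y

/-- The residual bound of `V(A'(T))` is finite (`κ(A'(T)) < ω`): there is a finite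
bound strictly larger than the cardinality of every subdirectly irreducible member. -/
def ResBoundFinite (T : TM) : Prop :=
  ∃ N : ℕ, ∀ (B : Type) [(Sig T).Structure B],
    InVariety T B → IsSI (Sig T) B → Finite B ∧ Nat.card B < N

/-- Membership in `HS(A'(T))`: homomorphic images of subalgebras of `A'(T)`. -/
def InHS (T : TM) (B : Type*) [(Sig T).Structure B] : Prop :=
  ∃ (S : (Sig T).Substructure (El T)) (f : S →[Sig T] B), Function.Surjective f

/-- The constant `0` of an algebra in the signature of `A'(T)`. -/
def zeroB (T : TM) (B : Type*) [(Sig T).Structure B] : B :=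
  Structure.funMap (fn0 T) (fun i : Fin 0 => i.elim0)

/-- The meet operation of an algebra in the signature of `A'(T)`. -/
def meetB (T : TM) {B : Type*} [(Sig T).Structure B] (x y : B) : B :=
  Structure.funMap (fn2 T Ops2.meet) ![x, y]

/-- The multiplication of an algebra in the signature of `A'(T)`. -/
def mulB (T : TM) {B : Type*} [(Sig T).Structure B] (x y : B) : B :=
  Structure.funMap (fn2 T Ops2.mul) ![x, y]

/-- The operation `I` of an algebra in the signature of `A'(T)`. -/
def IB (T : TM) {B : Type*} [(Sig T).Structure B] (x : B) : B :=
  Structure.funMap (fn1 T Ops1.I) ![x]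

/-- The operation `J` of an algebra in the signature of `A'(T)`. -/
def JB (T : TM) {B : Type*} [(Sig T).Structure B] (x y z : B) : B :=
  Structure.funMap (fn3 T Ops3.J) ![x, y, z]

/-- The operation `J'` of an algebra in the signature of `A'(T)`. -/
def J'B (T : TM) {B : Type*} [(Sig T).Structure B] (x y z : B) : B :=
  Structure.funMap (fn3 T Ops3.J') ![x, y, z]

/-- The operation `K` of an algebra in the signature of `A'(T)`. -/
def KB (T : TM) {B : Type*} [(Sig T).Structure B] (x y z : B) : B :=
  Structure.funMap (fn3 T Ops3.K) ![x, y, z]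

/-- The operation `S₂` of an algebra in the signature of `A'(T)`. -/
def S2B (T : TM) {B : Type*} [(Sig T).Structure B] (u v x y z : B) : B :=
  Structure.funMap (fn5 T Ops5.S2) ![u, v, x, y, z]

/-- The term `e₂(m,n,x) = S₂(m,n,x,x,x)`. -/
def e2B (T : TM) {B : Type*} [(Sig T).Structure B] (m n x : B) : B :=
  S2B T m n x x x

/-- The semilattice order of an algebra in the signature of `A'(T)`:
`x ≤ y` iff `x ∧ y = x`. -/
def leB (T : TM) {B : Type*} [(Sig T).Structure B] (x y : B) : Prop :=
  meetB T x y = x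

/-- Parameters `m̄ ∈ B² ∪ B` for one of the operations `S₀`, `S₁`, `S₂`. -/
inductive SIdx (B : Type*) : Type _
  | s0 (m : B)
  | s1 (m : B)
  | s2 (m n : B)

/-- Which of `S₀, S₁, S₂` a parameter tuple belongs to. -/
def SIdx.tag {B : Type*} : SIdx B → Fin 3
  | .s0 _ => 0
  | .s1 _ => 1
  | .s2 _ _ => 2

/-- `SApp T σ x y z` is `S_i(m̄, x, y, z)` where `σ` packages `i` and `m̄`. -/
def SApp (T : TM) {B : Type*} [(Sig T).Structure B] : SIdx B → B → B → B → B
  | .s0 m, x, y, z => Structure.funMap (fn4 T Ops4.S0) ![m, x, y, z]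
  | .s1 m, x, y, z => Structure.funMap (fn4 T Ops4.S1) ![m, x, y, z]
  | .s2 m n, x, y, z => S2B T m n x y z

/-- `eApp T σ x` is the term function `e_i(m̄, x) = S_i(m̄, x, x, x)`. -/
def eApp (T : TM) {B : Type*} [(Sig T).Structure B] (σ : SIdx B) (x : B) : B :=
  SApp T σ x x x

/-- `Range(S_j)`: the set of values of the operation `S_j` on `B`. -/
def SRange (T : TM) (B : Type*) [(Sig T).Structure B] (j : Fin 3) : Set B :=
  {w | ∃ (σ : SIdx B) (x y z : B), σ.tag = j ∧ SApp T σ x y z = w}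

/-- A unary polynomial of `B`: a term function in one variable with parameters
from `B`. -/
def IsPolynomial (T : TM) {B : Type*} [(Sig T).Structure B] (f : B → B) : Prop :=
  ∃ t : (Sig T).Term (B ⊕ Unit), ∀ x : B, f x = t.realize (Sum.elim id fun _ => x)

/-- A fundamental translation: a unary polynomial obtained from a fundamental
operation by fixing all arguments but one. -/
def IsFundTranslation (T : TM) {B : Type*} [(Sig T).Structure B] (g : B → B) : Prop :=
  ∃ (n : ℕ) (F : (Sig T).Functions n) (i : Fin n) (v : Fin n → B),
    g = fun x => Structure.funMap F (Function.update v i x)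

/-- A polynomial generated by fundamental translations: a composition of finitely
many fundamental translations. -/
inductive IsTransPoly (T : TM) {B : Type*} [(Sig T).Structure B] : (B → B) → Prop
  | id : IsTransPoly T id
  | comp {g f : B → B} : IsFundTranslation T g → IsTransPoly T f → IsTransPoly T (g ∘ f)

end McKenzie

namespace McKenzie

open FirstOrder Language

section Infra
variable (T : TM)

/-- term builders -/
def tmm (a b : (Sig T).Term ℕ) : (Sig T).Term ℕ := Term.func (fn2 T Ops2.meet) ![a, b]
def tjj (a b c : (Sig T).Term ℕ) : (Sig T).Term ℕ := Term.func (fn3 T Ops3.J) ![a, b, c]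
def tjp (a b c : (Sig T).Term ℕ) : (Sig T).Term ℕ := Term.func (fn3 T Ops3.J') ![a, b, c]
def tkk (a b c : (Sig T).Term ℕ) : (Sig T).Term ℕ := Term.func (fn3 T Ops3.K) ![a, b, c]
def tss (a b c d e : (Sig T).Term ℕ) : (Sig T).Term ℕ := Term.func (fn5 T Ops5.S2) ![a, b, c, d, e]

variable {M : Type*} [(Sig T).Structure M]

lemma rl_tmm (v : ℕ → M) (a b : (Sig T).Term ℕ) :
    (tmm T a b).realize v = meetB T (a.realize v) (b.realize v) := by
  simp only [tmm, Term.realize_func, meetB]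
  congr 1; funext i; fin_cases i <;> simp

lemma rl_tjj (v : ℕ → M) (a b c : (Sig T).Term ℕ) :
    (tjj T a b c).realize v = JB T (a.realize v) (b.realize v) (c.realize v) := by
  simp only [tjj, Term.realize_func, JB]
  congr 1; funext i; fin_cases i <;> simp

lemma rl_tjp (v : ℕ → M) (a b c : (Sig T).Term ℕ) :
    (tjp T a b c).realize v = J'B T (a.realize v) (b.realize v) (c.realize v) := by
  simp only [tjp, Term.realize_func, J'B]
  congr 1; funext i; fin_cases i <;> simp

lemma rl_tkk (v : ℕ → M) (a b c : (Sig T).Term ℕ) :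
    (tkk T a b c).realize v = KB T (a.realize v) (b.realize v) (c.realize v) := by
  simp only [tkk, Term.realize_func, KB]
  congr 1; funext i; fin_cases i <;> simp

lemma rl_tss (v : ℕ → M) (a b c d e : (Sig T).Term ℕ) :
    (tss T a b c d e).realize v = S2B T (a.realize v) (b.realize v) (c.realize v) (d.realize v) (e.realize v) := by
  simp only [tss, Term.realize_func, S2B]
  congr 1; funext i; fin_cases i <;> simp

lemma meetB_el (x y : El T) : meetB T x y = El.meet x y := rfl
lemma JB_el (x y z : El T) : JB T x y z = El.opJ x y z := rfl
lemma J'B_el (x y z : El T) : J'B T x y z = El.opJ' x y z := rfl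
lemma KB_el (x y z : El T) : KB T x y z = El.opK x y z := rfl
lemma S2B_el (a b c d e : El T) : S2B T a b c d e = El.opS2 a b c d e := rfl

end Infra
namespace El
variable {T : TM}

lemma meet_self (x : El T) : x.meet x = x := by simp [meet]

lemma meet_comm (x y : El T) : x.meet y = y.meet x := by
  unfold meet
  by_cases h : x = y
  · subst h; simp
  · rw [if_neg h, if_neg (Ne.symm h)]

lemma zero_meet (x : El T) : (zero : El T).meet x = zero := by
  unfold meet; split <;> rfl

lemma meet_zero (x : El T) : x.meet zero = zero := by
  unfold meet
  split_ifs with h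
  · exact h
  · rfl

lemma meet_ne {x y : El T} (h : x ≠ y) : x.meet y = zero := by
  unfold meet; rw [if_neg h]

lemma meet_assoc (x y z : El T) : (x.meet y).meet z = x.meet (y.meet z) := by
  unfold meet
  split_ifs <;> simp_all

lemma meet_absorb (x y : El T) : x.meet (x.meet y) = x.meet y := by
  rw [← meet_assoc, meet_self]

lemma bar_ne_some_self (y : El T) : y.bar ≠ some y := by
  cases y <;> simp [bar]

lemma ne_of_bar {x y : El T} (h : y.bar = some x) : x ≠ y := by
  rintro rfl
  exact bar_ne_some_self _ h

lemma bar_ne_some_zero (y : El T) : y.bar ≠ some zero := by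
  cases y <;> simp [bar]

lemma opJ_same (x z : El T) : opJ x x z = x := by simp [opJ]

lemma opJ_bar {x y : El T} (h : y.bar = some x) (z : El T) : opJ x y z = x.meet z := by
  unfold opJ; rw [if_neg (ne_of_bar h), if_pos h]

lemma opJ_none {x y : El T} (h1 : x ≠ y) (h2 : y.bar ≠ some x) (z : El T) :
    opJ x y z = zero := by
  unfold opJ; rw [if_neg h1, if_neg h2]

lemma opJ_zero_left (y z : El T) : opJ zero y z = zero := by
  unfold opJ
  split_ifs with h1 h2
  · rfl
  · exact absurd h2 (bar_ne_some_zero y)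
  · rfl

lemma opJ_zero_mid (x z : El T) : opJ x zero z = zero := by
  unfold opJ
  split_ifs with h1 h2
  · exact h1
  · simp [bar] at h2
  · rfl

lemma opJ'_same (x z : El T) : opJ' x x z = x.meet z := by simp [opJ']

lemma opJ'_bar {x y : El T} (h : y.bar = some x) (z : El T) : opJ' x y z = x := by
  unfold opJ'; rw [if_neg (ne_of_bar h), if_pos h]

lemma opJ'_none {x y : El T} (h1 : x ≠ y) (h2 : y.bar ≠ some x) (z : El T) :
    opJ' x y z = zero := by
  unfold opJ'; rw [if_neg h1, if_neg h2]

lemma opJ'_zero_mid (x z : El T) : opJ' x zero z = zero := by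
  unfold opJ'
  split_ifs with h1 h2
  · rw [h1, zero_meet]
  · simp [bar] at h2
  · rfl

lemma opK_bar {x y : El T} (h : y.bar = some x) (z : El T) : opK x y z = y := by
  unfold opK; rw [if_pos h]

lemma opK_deg_bar {x z : El T} (hbz : z.bar = some x) : opK x x z = z := by
  unfold opK
  rw [if_neg (bar_ne_some_self x), if_pos ⟨rfl, hbz⟩]

lemma opK_all_eq (x : El T) : opK x x x = x := by
  unfold opK
  rw [if_neg (bar_ne_some_self x), if_neg (fun h => bar_ne_some_self x h.2),
    meet_self, meet_self]

lemma opK_deg_none {x z : El T} (hbz : ¬ z.bar = some x) (hxz : x ≠ z) :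
    opK x x z = zero := by
  unfold opK
  rw [if_neg (bar_ne_some_self x), if_neg (fun h => hbz h.2), meet_ne hxz, meet_zero]

lemma opK_else {x y : El T} (h1 : ¬ y.bar = some x) (h2 : x ≠ y) (z : El T) :
    opK x y z = zero := by
  unfold opK
  rw [if_neg h1, if_neg (fun h => h2 h.1)]
  by_cases hyz : y = z
  · subst hyz; rw [meet_self, meet_ne h2]
  · rw [meet_ne hyz, meet_zero]

lemma sCore_diag (z : El T) : sCore z z z = z := by
  unfold sCore fjoin
  rw [meet_self]
  split <;> rfl

lemma opS2_diag (x y z : El T) :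
    opS2 x y z z z = if y.bar = some x then z else zero := by
  unfold opS2
  rw [sCore_diag]

/-- Identity I0 -/
lemma el_I0 (x y z : El T) : opJ x y (opS2 x y z z z) = opJ x y z := by
  by_cases hb : y.bar = some x
  · rw [opJ_bar hb, opJ_bar hb, opS2_diag, if_pos hb]
  · by_cases hxy : x = y
    · subst hxy; rw [opJ_same, opJ_same]
    · rw [opJ_none hxy hb, opJ_none hxy hb]

/-- Identity D0 -/
lemma el_D0 (x : El T) : opJ' x x x = x := by rw [opJ'_same, meet_self]

/-- Identity I2 -/
lemma el_I2 (p q x : El T) : opJ (opJ p q x) q (opJ p q x) = opJ p q x := by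
  by_cases hb : q.bar = some p
  · rw [opJ_bar hb]
    by_cases hpx : p = x
    · subst hpx; rw [meet_self, opJ_bar hb, meet_self]
    · rw [meet_ne hpx, opJ_zero_left]
  · by_cases hpq : p = q
    · subst hpq; rw [opJ_same, opJ_same]
    · rw [opJ_none hpq hb, opJ_zero_left]

/-- Identity I3 -/
lemma el_I3 (p q x z : El T) :
    opJ (opJ p q x) q (opJ p q (x.meet z)) = opJ p q (x.meet z) := by
  by_cases hb : q.bar = some p
  · rw [opJ_bar hb, opJ_bar hb]
    by_cases hpx : p = x
    · subst hpx
      rw [meet_self, meet_absorb, opJ_bar hb, meet_absorb]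
    · have h2 : p.meet (x.meet z) = zero := by
        by_cases hxz : x = z
        · subst hxz; rw [meet_self]; exact meet_ne hpx
        · rw [meet_ne hxz, meet_zero]
      rw [meet_ne hpx, h2, opJ_zero_left]
  · by_cases hpq : p = q
    · subst hpq; simp only [opJ_same]
    · rw [opJ_none hpq hb, opJ_none hpq hb, opJ_zero_left]

/-- Identity C1' -/
lemma el_C1' (x y z u : El T) :
    opJ x (opK x y z) x
      = opJ' x y (opJ (opJ x y (x.meet u)) z (opJ x y (x.meet u))) := by
  by_cases hb : y.bar = some x
  · rw [opK_bar hb, opJ_bar hb, meet_self, opJ'_bar hb]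
  · by_cases hxy : x = y
    · subst hxy
      simp only [opJ_same]
      rw [opJ'_same]
      by_cases hbz : z.bar = some x
      · rw [opK_deg_bar hbz, opJ_bar hbz, meet_self, meet_self]
      · by_cases hxz : x = z
        · subst hxz; rw [opK_all_eq, opJ_same, meet_self]
        · rw [opK_deg_none hbz hxz, opJ_zero_mid, opJ_none hxz hbz, meet_zero]
    · rw [opK_else hb hxy, opJ_zero_mid, opJ'_none hxy hb]

/-- Identity C2 -/
lemma el_C2 (x y z u w : El T) :
    opJ x (opK x y z)
      ((opJ x (opK x y z) x).meet
        (opJ (opJ x y (x.meet u)) z ((opJ x y (x.meet u)).meet w)))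
    = (opJ x (opK x y z) x).meet
        (opJ (opJ x y (x.meet u)) z ((opJ x y (x.meet u)).meet w)) := by
  by_cases hb : y.bar = some x
  · rw [opK_bar hb]
    rw [opJ_bar hb x, meet_self, opJ_bar hb, meet_absorb]
  · by_cases hxy : x = y
    · subst hxy
      by_cases hbz : z.bar = some x
      · rw [opK_deg_bar hbz, opJ_bar hbz x, meet_self, opJ_bar hbz, meet_absorb]
      · by_cases hxz : x = z
        · subst hxz
          rw [opK_all_eq]
          simp only [opJ_same, meet_self]
        · rw [opK_deg_none hbz hxz]
          simp only [opJ_zero_mid, zero_meet]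
    · rw [opK_else hb hxy]
      simp only [opJ_zero_mid, zero_meet]

/-- Identity CD2 -/
lemma el_CD2 (x y z u w : El T) :
    opJ' x (opK x y z)
      (opJ (opJ x y (x.meet u)) z ((opJ x y (x.meet u)).meet w))
    = opJ' x y (opJ (opJ x y (x.meet u)) z (opJ x y (x.meet u))) := by
  by_cases hb : y.bar = some x
  · rw [opK_bar hb, opJ'_bar hb, opJ'_bar hb]
  · by_cases hxy : x = y
    · subst hxy
      simp only [opJ_same]
      rw [opJ'_same]
      by_cases hbz : z.bar = some x
      · rw [opK_deg_bar hbz, opJ'_bar hbz, opJ_bar hbz x, meet_self, meet_self]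
      · by_cases hxz : x = z
        · subst hxz
          rw [opK_all_eq]
          simp only [opJ_same, opJ'_same, meet_self]
        · rw [opK_deg_none hbz hxz, opJ'_zero_mid, opJ_none hxz hbz x, meet_zero]
    · rw [opK_else hb hxy, opJ'_zero_mid, opJ'_none hxy hb]

end El
section BLevel
open FirstOrder Language El
variable (T : TM) {B : Type*} [(Sig T).Structure B] (hB : InVariety T B)
include hB

lemma bM1 (x : B) : meetB T x x = x := by
  have h := hB (tmm T (.var 0) (.var 0)) (.var 0)
    (by intro v
        simp only [rl_tmm, Term.realize_var, meetB_el]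
        exact meet_self (v 0))
    (fun _ => x)
  simp only [rl_tmm, Term.realize_var] at h
  exact h

lemma bM2 (x y : B) : meetB T x y = meetB T y x := by
  have h := hB (tmm T (.var 0) (.var 1)) (tmm T (.var 1) (.var 0))
    (by intro v
        simp only [rl_tmm, Term.realize_var, meetB_el]
        exact meet_comm (v 0) (v 1))
    (fun i => if i = 0 then x else y)
  simp only [rl_tmm, Term.realize_var] at h
  exact h

lemma bM3 (x y z : B) : meetB T (meetB T x y) z = meetB T x (meetB T y z) := by
  have h := hB (tmm T (tmm T (.var 0) (.var 1)) (.var 2))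
      (tmm T (.var 0) (tmm T (.var 1) (.var 2)))
    (by intro v
        simp only [rl_tmm, Term.realize_var, meetB_el]
        exact meet_assoc (v 0) (v 1) (v 2))
    (fun i => if i = 0 then x else if i = 1 then y else z)
  simp only [rl_tmm, Term.realize_var] at h
  exact h

lemma bI1 (x z : B) : JB T x x z = x := by
  have h := hB (tjj T (.var 0) (.var 0) (.var 1)) (.var 0)
    (by intro v
        simp only [rl_tjj, Term.realize_var, JB_el]
        exact opJ_same (v 0) (v 1))
    (fun i => if i = 0 then x else z)
  simp only [rl_tjj, Term.realize_var] at h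
  exact h

lemma bD0 (x : B) : J'B T x x x = x := by
  have h := hB (tjp T (.var 0) (.var 0) (.var 0)) (.var 0)
    (by intro v
        simp only [rl_tjp, Term.realize_var, J'B_el]
        exact el_D0 (v 0))
    (fun _ => x)
  simp only [rl_tjp, Term.realize_var] at h
  exact h

lemma bI0 (x y z : B) : JB T x y (S2B T x y z z z) = JB T x y z := by
  have h := hB
      (tjj T (.var 0) (.var 1) (tss T (.var 0) (.var 1) (.var 2) (.var 2) (.var 2)))
      (tjj T (.var 0) (.var 1) (.var 2))
    (by intro v
        simp only [rl_tjj, rl_tss, Term.realize_var, JB_el, S2B_el]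
        exact el_I0 (v 0) (v 1) (v 2))
    (fun i => if i = 0 then x else if i = 1 then y else z)
  simp only [rl_tjj, rl_tss, Term.realize_var] at h
  exact h

lemma bI2 (p q x : B) : JB T (JB T p q x) q (JB T p q x) = JB T p q x := by
  have h := hB
      (tjj T (tjj T (.var 0) (.var 1) (.var 2)) (.var 1) (tjj T (.var 0) (.var 1) (.var 2)))
      (tjj T (.var 0) (.var 1) (.var 2))
    (by intro v
        simp only [rl_tjj, Term.realize_var, JB_el]
        exact el_I2 (v 0) (v 1) (v 2))
    (fun i => if i = 0 then p else if i = 1 then q else x)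
  simp only [rl_tjj, Term.realize_var] at h
  exact h

lemma bI3 (p q x z : B) :
    JB T (JB T p q x) q (JB T p q (meetB T x z)) = JB T p q (meetB T x z) := by
  have h := hB
      (tjj T (tjj T (.var 0) (.var 1) (.var 2)) (.var 1)
        (tjj T (.var 0) (.var 1) (tmm T (.var 2) (.var 3))))
      (tjj T (.var 0) (.var 1) (tmm T (.var 2) (.var 3)))
    (by intro v
        simp only [rl_tjj, rl_tmm, Term.realize_var, JB_el, meetB_el]
        exact el_I3 (v 0) (v 1) (v 2) (v 3))
    (fun i => if i = 0 then p else if i = 1 then q else if i = 2 then x else z)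
  simp only [rl_tjj, rl_tmm, Term.realize_var] at h
  exact h

lemma bC1' (x y z u : B) :
    JB T x (KB T x y z) x
      = J'B T x y (JB T (JB T x y (meetB T x u)) z (JB T x y (meetB T x u))) := by
  have h := hB
      (tjj T (.var 0) (tkk T (.var 0) (.var 1) (.var 2)) (.var 0))
      (tjp T (.var 0) (.var 1)
        (tjj T (tjj T (.var 0) (.var 1) (tmm T (.var 0) (.var 3))) (.var 2)
          (tjj T (.var 0) (.var 1) (tmm T (.var 0) (.var 3)))))
    (by intro v
        simp only [rl_tjj, rl_tjp, rl_tkk, rl_tmm, Term.realize_var, JB_el, J'B_el,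
          KB_el, meetB_el]
        exact el_C1' (v 0) (v 1) (v 2) (v 3))
    (fun i => if i = 0 then x else if i = 1 then y else if i = 2 then z else u)
  simp only [rl_tjj, rl_tjp, rl_tkk, rl_tmm, Term.realize_var] at h
  exact h

lemma bC2 (x y z u w : B) :
    JB T x (KB T x y z)
      (meetB T (JB T x (KB T x y z) x)
        (JB T (JB T x y (meetB T x u)) z (meetB T (JB T x y (meetB T x u)) w)))
    = meetB T (JB T x (KB T x y z) x)
        (JB T (JB T x y (meetB T x u)) z (meetB T (JB T x y (meetB T x u)) w)) := by
  have h := hB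
      (tjj T (.var 0) (tkk T (.var 0) (.var 1) (.var 2))
        (tmm T (tjj T (.var 0) (tkk T (.var 0) (.var 1) (.var 2)) (.var 0))
          (tjj T (tjj T (.var 0) (.var 1) (tmm T (.var 0) (.var 3))) (.var 2)
            (tmm T (tjj T (.var 0) (.var 1) (tmm T (.var 0) (.var 3))) (.var 4)))))
      (tmm T (tjj T (.var 0) (tkk T (.var 0) (.var 1) (.var 2)) (.var 0))
        (tjj T (tjj T (.var 0) (.var 1) (tmm T (.var 0) (.var 3))) (.var 2)
          (tmm T (tjj T (.var 0) (.var 1) (tmm T (.var 0) (.var 3))) (.var 4))))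
    (by intro v
        simp only [rl_tjj, rl_tkk, rl_tmm, Term.realize_var, JB_el, KB_el, meetB_el]
        exact el_C2 (v 0) (v 1) (v 2) (v 3) (v 4))
    (fun i => if i = 0 then x else if i = 1 then y else if i = 2 then z else
      if i = 3 then u else w)
  simp only [rl_tjj, rl_tkk, rl_tmm, Term.realize_var] at h
  exact h

lemma bCD2 (x y z u w : B) :
    J'B T x (KB T x y z)
      (JB T (JB T x y (meetB T x u)) z (meetB T (JB T x y (meetB T x u)) w))
    = J'B T x y (JB T (JB T x y (meetB T x u)) z (JB T x y (meetB T x u))) := by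
  have h := hB
      (tjp T (.var 0) (tkk T (.var 0) (.var 1) (.var 2))
        (tjj T (tjj T (.var 0) (.var 1) (tmm T (.var 0) (.var 3))) (.var 2)
          (tmm T (tjj T (.var 0) (.var 1) (tmm T (.var 0) (.var 3))) (.var 4))))
      (tjp T (.var 0) (.var 1)
        (tjj T (tjj T (.var 0) (.var 1) (tmm T (.var 0) (.var 3))) (.var 2)
          (tjj T (.var 0) (.var 1) (tmm T (.var 0) (.var 3)))))
    (by intro v
        simp only [rl_tjj, rl_tjp, rl_tkk, rl_tmm, Term.realize_var, JB_el, J'B_el,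
          KB_el, meetB_el]
        exact el_CD2 (v 0) (v 1) (v 2) (v 3) (v 4))
    (fun i => if i = 0 then x else if i = 1 then y else if i = 2 then z else
      if i = 3 then u else w)
  simp only [rl_tjj, rl_tjp, rl_tkk, rl_tmm, Term.realize_var] at h
  exact h

end BLevel
/-- Suppose the decreasing sequence `r = r₁ ≥ … ≥ r_n = s`
satisfies `(r_i, r_{i+1}) ∈ Cg^B(c,d)` and there are constants `p_i, q_i` with
`r_i = J(p_i,q_i,r_i)` and `r_{i+1} = J(p_i,q_i,r_{i+1})`.  Then there is `ρ ∈ B`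
with `r = J(r,ρ,r')` and `s = J(r,ρ,s')`, where `r' = e₂(r,ρ,r)` and
`s' = e₂(r,ρ,s)`. -/
theorem J_chain_collapse (T : TM) (B : Type*) [(Sig T).Structure B]
    (hB : InVariety T B)
    (c d : B) (n : ℕ) (rs : Fin (n + 1) → B)
    (hdec : ∀ k : Fin n, leB T (rs k.succ) (rs k.castSucc))
    (hCg : ∀ k : Fin n, PrinCg (Sig T) B c d (rs k.castSucc) (rs k.succ))
    (p q : Fin n → B)
    (hfix : ∀ k : Fin n,
      JB T (p k) (q k) (rs k.castSucc) = rs k.castSucc ∧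
      JB T (p k) (q k) (rs k.succ) = rs k.succ)
    (r s : B) (hr : r = rs 0) (hs : s = rs (Fin.last n)) :
    ∃ ρ : B,
      JB T r ρ (e2B T r ρ r) = r ∧
      JB T r ρ (e2B T r ρ s) = s := by
  have key : ∀ k : Fin (n + 1), ∃ ρ : B,
      JB T r ρ r = r ∧ JB T r ρ (rs k) = rs k ∧ J'B T r ρ (rs k) = r ∧
        meetB T (rs k) r = rs k := by
    intro k
    induction k using Fin.induction with
    | zero =>
        refine ⟨r, bI1 T hB r r, ?_, ?_, ?_⟩ <;> rw [← hr]
        · exact bI1 T hB r r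
        · exact bD0 T hB r
        · exact bM1 T hB r
    | succ k ih =>
        obtain ⟨ρ, _hE1, hE2, hD, hle⟩ := ih
        set b := rs k.castSucc with hbdef
        set cc := rs k.succ with hcdef
        have hbc : meetB T cc b = cc := hdec k
        obtain ⟨hf1, hf2⟩ := hfix k
        have hbc' : meetB T b cc = cc := by rw [bM2 T hB b cc]; exact hbc
        have e3 : JB T b (q k) b = b := by
          have h := bI2 T hB (p k) (q k) b
          rw [hf1] at h
          exact h
        have e4 : JB T b (q k) cc = cc := by
          have h := bI3 T hB (p k) (q k) b cc
          rw [hf1, hbc', hf2] at h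
          exact h
        have hrb : meetB T r b = b := by rw [bM2 T hB r b]; exact hle
        have hcr : meetB T cc r = cc := by
          calc meetB T cc r = meetB T (meetB T cc b) r := by rw [hbc]
            _ = meetB T cc (meetB T b r) := bM3 T hB cc b r
            _ = meetB T cc b := by rw [hle]
            _ = cc := hbc
        have hrc : meetB T r cc = cc := by rw [bM2 T hB r cc]; exact hcr
        have hBb : JB T r ρ (meetB T r b) = b := by rw [hrb]; exact hE2
        have c1 : JB T r (KB T r ρ (q k)) r = r := by
          have h := bC1' T hB r ρ (q k) b
          rw [hBb, e3, hD] at h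
          exact h
        have c2 : JB T r (KB T r ρ (q k)) cc = cc := by
          have h := bC2 T hB r ρ (q k) b cc
          rw [hBb, hbc', e4, c1, hrc] at h
          exact h
        have d2 : J'B T r (KB T r ρ (q k)) cc = r := by
          have h := bCD2 T hB r ρ (q k) b cc
          rw [hBb, hbc', e4, e3, hD] at h
          exact h
        exact ⟨KB T r ρ (q k), c1, c2, d2, hcr⟩
  obtain ⟨ρ, h1, h2, -, -⟩ := key (Fin.last n)
  rw [← hs] at h2
  refine ⟨ρ, ?_, ?_⟩
  · have h := bI0 T hB r ρ r
    rw [h1] at h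
    exact h
  · have h := bI0 T hB r ρ s
    rw [h2] at h
    exact h

end McKenzie
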